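/- arXiv:1001.4030 — 2 statements merged into one kernel-verified Lean document; each statement's English description precedes it below -/
import Mathlib

section
/- Let α ∈ (0,1) be irrational. Define α₀ = min over integers m of |α − m| and, inductively, α_{n+1} = min over integers m of |1/α_n − m| for n ≥ 0 (so each α_n ∈ (0,1/2) for n ≥ 1). Let qₙ denote the denominators of the convergents of the regular continued fraction expansion of α. Then the sequence s_k = α₁ · α₂^{α₁} · α₃^{α₁α₂} · α₄^{α₁α₂α₃} ⋯ α_k^{α₁⋯α_{k−1}} converges to 0 as k → ∞ if and only if the Brjuno series ∑_{n≥0} (log q_{n+1})/qₙ diverges. -/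
open MeasureTheory Filter

/-- The Gauss map orbit of `α`: `x₀ = α`, `x_{n+1} = {1/x_n}`. -/
noncomputable def gaussIter (α : ℝ) : ℕ → ℝ
  | 0 => α
  | n + 1 => Int.fract (1 / gaussIter α n)

/-- `cfa α n` is the partial quotient `a_{n+1}` of the regular continued fraction of `α`. -/
noncomputable def cfa (α : ℝ) (n : ℕ) : ℤ := ⌊1 / gaussIter α n⌋

/-- `cfq α n = qₙ`, the denominator of the `n`-th convergent of the regular continued
fraction of `α`: `q₀ = 1`, `q₁ = a₁`, `q_{n+1} = a_{n+1} qₙ + q_{n-1}`. -/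
noncomputable def cfq (α : ℝ) : ℕ → ℤ
  | 0 => 1
  | 1 => cfa α 0
  | n + 2 => cfa α (n + 1) * cfq α (n + 1) + cfq α n

/-- `α` is a Brjuno number if `∑ (log q_{n+1})/qₙ` converges. -/
def IsBrjuno (α : ℝ) : Prop :=
  Summable fun n : ℕ => Real.log ((cfq α (n + 1) : ℝ)) / ((cfq α n : ℝ))

/-- `Irr_N`: irrational numbers in `(0,1)` whose partial quotients are all at least `N`. -/
def IrrN (N : ℕ) : Set ℝ :=
  {α | α ∈ Set.Ioo (0 : ℝ) 1 ∧ Irrational α ∧ ∀ n : ℕ, (N : ℤ) ≤ cfa α n}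

/-- The modified continued fraction data of the paper: `α₀ = ‖α‖` (distance of `α` to the
nearest integer) and `α_{n+1} = ‖1/αₙ‖`. -/
noncomputable def modCF (α : ℝ) : ℕ → ℝ
  | 0 => |α - round α|
  | n + 1 => |1 / modCF α n - round (1 / modCF α n)|

/-- `sProd α k = α₁ · α₂^{α₁} · α₃^{α₁α₂} ⋯ α_k^{α₁⋯α_{k-1}}` (real exponents). -/
noncomputable def sProd (α : ℝ) (k : ℕ) : ℝ :=
  ∏ j ∈ Finset.range k,
    (modCF α (j + 1)) ^ (∏ i ∈ Finset.range j, modCF α (i + 1))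

/-!
Let `xₙ` be the Gauss orbit of `α` and `βₙ = x₀ ⋯ x_{n-1}`, so that `1/(2qₙ) ≤ βₙ ≤ 1/qₙ`.
The nearest-integer orbit follows the Gauss orbit: `αₙ = min(x_κ, 1 - x_κ)` along an index
`κ = κₙ` that advances by one step when `x_κ < 1/2` and by two steps otherwise, because then
`1 - x_κ = x_κ x_{κ+1}`. Hence `α₀ ⋯ α_{n-1} = β_{κₙ}` and `-log s_k` is, up to the factor `1/α₀`,
a partial sum of `∑ β_{κₙ} log(1/αₙ)`. Up to the summable series `∑ βₙ`, this series is comparable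
with Yoccoz's series `∑ βₙ log(1/xₙ)`: the Gauss steps it skips have `xₘ > 1/2`, so
`log(1/xₘ) < log 2`. Finally `log(1/xₙ) = log(q_{n+1}/qₙ) + O(1)` and `∑ log qₙ / qₙ < ∞`, since
`q_{n+2} ≥ 2qₙ`, make Yoccoz's series comparable with the Brjuno series.
-/

theorem summable_of_norm_add_two_le {E : Type*} [SeminormedAddCommGroup E] [CompleteSpace E]
    {f : ℕ → E} {r : ℝ} (hr : r < 1) (hf : ∀ n, ‖f (n + 2)‖ ≤ r * ‖f n‖) : Summable f := by
  refine Summable.even_add_odd ?_ ?_ <;>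
    exact summable_of_ratio_norm_eventually_le hr (Eventually.of_forall fun n => hf _)

theorem summable_one_div_of_mul_le_add_two {q : ℕ → ℝ} {r : ℝ} (hr : 1 < r) (hq : ∀ n, 0 < q n)
    (hgrowth : ∀ n, r * q n ≤ q (n + 2)) : Summable fun n => 1 / q n := by
  refine summable_of_norm_add_two_le (inv_lt_one_of_one_lt₀ hr) fun n => ?_
  have hrq : 0 < r * q n := mul_pos (zero_lt_one.trans hr) (hq n)
  rw [Real.norm_of_nonneg (one_div_pos.2 (hq _)).le, Real.norm_of_nonneg (one_div_pos.2 (hq _)).le]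
  calc 1 / q (n + 2) ≤ 1 / (r * q n) := one_div_le_one_div_of_le hrq (hgrowth n)
    _ = r⁻¹ * (1 / q n) := by rw [← one_div, one_div_mul_one_div]

theorem summable_of_nonneg_of_le_mul_add {ι : Type*} {f g h : ι → ℝ} {C : ℝ}
    (hf : ∀ i, 0 ≤ f i) (hle : ∀ i, f i ≤ C * g i + h i) (hg : Summable g) (hh : Summable h) :
    Summable f :=
  Summable.of_nonneg_of_le hf hle ((hg.mul_left C).add hh)

theorem summable_comp_iff_of_le_of_notMem_range {ι κ : Type*} {u h : ι → ℝ} {σ : κ → ι}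
    (hσ : Function.Injective σ) (hu : ∀ i, 0 ≤ u i) (hh : Summable h)
    (hle : ∀ i ∉ Set.range σ, u i ≤ h i) : Summable (u ∘ σ) ↔ Summable u := by
  refine ⟨fun hcomp => ?_, fun hsum => hsum.comp_injective hσ⟩
  have hrange : Summable ((Set.range σ).indicator u) :=
    (hσ.summable_iff fun i hi => Set.indicator_of_notMem hi u).1 <| hcomp.congr fun k =>
      (Set.indicator_of_mem (Set.mem_range_self k) u).symm
  refine Summable.of_nonneg_of_le hu (fun i => ?_) (hrange.add (hh.indicator (Set.range σ)ᶜ))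
  by_cases hi : i ∈ Set.range σ
  · simp [hi]
  · simpa [hi] using hle i hi

theorem tendsto_exp_neg_sum_range_zero_iff {w : ℕ → ℝ} (hw : ∀ n, 0 ≤ w n) :
    Tendsto (fun k => Real.exp (-∑ j ∈ Finset.range k, w j)) atTop (nhds 0) ↔ ¬ Summable w := by
  rw [Real.tendsto_exp_comp_nhds_zero, tendsto_neg_atBot_iff,
    not_summable_iff_tendsto_nat_atTop_of_nonneg hw]

theorem Real.log_le_log_two_add_log {a x y : ℝ} (ha : 1 ≤ a) (hx0 : 0 < x) (hx : x ≤ a + 1)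
    (hy : a ≤ y) : Real.log x ≤ Real.log 2 + Real.log y := by
  rw [← Real.log_mul two_ne_zero (by linarith)]
  exact Real.log_le_log hx0 (by linarith)

theorem gaussIter_succ (α : ℝ) (n : ℕ) :
    gaussIter α (n + 1) = 1 / gaussIter α n - cfa α n := rfl

theorem cfq_add_two (α : ℝ) (n : ℕ) :
    cfq α (n + 2) = cfa α (n + 1) * cfq α (n + 1) + cfq α n := rfl

section GaussOrbit

variable {α : ℝ} (hα : α ∈ Set.Ioo 0 1) (hirr : Irrational α)
include hα hirr

theorem gaussIter_mem_Ioo_and_irrational (n : ℕ) :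
    gaussIter α n ∈ Set.Ioo 0 1 ∧ Irrational (gaussIter α n) := by
  induction n with
  | zero => exact ⟨hα, hirr⟩
  | succ n ih =>
    have hirr' : Irrational (gaussIter α (n + 1)) := by
      rw [gaussIter_succ, one_div]
      exact ih.2.inv.sub_intCast _
    exact ⟨⟨(Int.fract_nonneg _).lt_of_ne' hirr'.ne_zero, Int.fract_lt_one _⟩, hirr'⟩

theorem gaussIter_pos (n : ℕ) : 0 < gaussIter α n :=
  (gaussIter_mem_Ioo_and_irrational hα hirr n).1.1

theorem gaussIter_lt_one (n : ℕ) : gaussIter α n < 1 :=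
  (gaussIter_mem_Ioo_and_irrational hα hirr n).1.2

theorem gaussIter_ne_half (n : ℕ) : gaussIter α n ≠ 1 / 2 := fun h =>
  (gaussIter_mem_Ioo_and_irrational hα hirr n).2 ⟨1 / 2, by rw [h]; push_cast; rfl⟩

theorem one_le_cfa (n : ℕ) : 1 ≤ cfa α n :=
  Int.le_floor.2 <| by
    exact_mod_cast (one_lt_one_div (gaussIter_pos hα hirr n) (gaussIter_lt_one hα hirr n)).le

theorem gaussIter_succ_of_half_lt {m : ℕ} (h : 1 / 2 < gaussIter α m) :
    gaussIter α (m + 1) = 1 / gaussIter α m - 1 := by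
  have hpos := gaussIter_pos hα hirr m
  have hcfa : cfa α m = 1 := Int.floor_eq_iff.2 ⟨by
    exact_mod_cast (one_lt_one_div hpos (gaussIter_lt_one hα hirr m)).le, by
    rw [div_lt_iff₀ hpos]; push_cast; linarith⟩
  rw [gaussIter_succ, hcfa, Int.cast_one]

theorem one_sub_gaussIter_of_half_lt {m : ℕ} (h : 1 / 2 < gaussIter α m) :
    1 - gaussIter α m = gaussIter α m * gaussIter α (m + 1) := by
  have hpos := gaussIter_pos hα hirr m
  rw [gaussIter_succ_of_half_lt hα hirr h]
  field_simp

theorem fract_one_div_one_sub_gaussIter {m : ℕ} (h : 1 / 2 < gaussIter α m) :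
    Int.fract (1 / (1 - gaussIter α m)) = gaussIter α (m + 2) := by
  have hpos := gaussIter_pos hα hirr m
  have hne : 1 - gaussIter α m ≠ 0 := (sub_pos.2 (gaussIter_lt_one hα hirr m)).ne'
  have hsplit : 1 / (1 - gaussIter α m) = 1 / gaussIter α (m + 1) + 1 := by
    rw [gaussIter_succ_of_half_lt hα hirr h]
    field_simp
    ring
  rw [hsplit, Int.fract_add_one]
  rfl

theorem one_le_cfq : ∀ n, 1 ≤ cfq α n
  | 0 => le_rfl
  | 1 => one_le_cfa hα hirr 0
  | n + 2 => by
    have := one_le_cfq n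
    have := one_le_cfq (n + 1)
    have := one_le_cfa hα hirr (n + 1)
    rw [cfq_add_two]
    nlinarith

theorem cfq_le_cfq_succ : ∀ n, cfq α n ≤ cfq α (n + 1)
  | 0 => one_le_cfa hα hirr 0
  | n + 1 => by
    have := one_le_cfq hα hirr n
    have := one_le_cfq hα hirr (n + 1)
    have := one_le_cfa hα hirr (n + 1)
    rw [cfq_add_two]
    nlinarith

theorem cfq_pos (n : ℕ) : (0 : ℝ) < cfq α n := by
  exact_mod_cast one_le_cfq hα hirr n

theorem two_mul_cfq_le_cfq_add_two (n : ℕ) : 2 * (cfq α n : ℝ) ≤ cfq α (n + 2) := by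
  have := one_le_cfq hα hirr (n + 1)
  have := one_le_cfa hα hirr (n + 1)
  have := cfq_le_cfq_succ hα hirr n
  rw [cfq_add_two]
  exact_mod_cast (by nlinarith : 2 * cfq α n ≤ cfa α (n + 1) * cfq α (n + 1) + cfq α n)

theorem cfa_mul_cfq_le_cfq_succ : ∀ n, cfa α n * cfq α n ≤ cfq α (n + 1)
  | 0 => (mul_one _).le
  | n + 1 => by
    have := one_le_cfq hα hirr n
    rw [cfq_add_two]
    omega

theorem cfq_succ_le_cfa_add_one_mul : ∀ n, cfq α (n + 1) ≤ (cfa α n + 1) * cfq α n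
  | 0 => by simp [cfq]
  | n + 1 => by
    have := cfq_le_cfq_succ hα hirr n
    rw [cfq_add_two]
    linarith

end GaussOrbit

noncomputable def gaussProd (α : ℝ) (n : ℕ) : ℝ := ∏ i ∈ Finset.range n, gaussIter α i

noncomputable def yoccozTerm (α : ℝ) (n : ℕ) : ℝ := gaussProd α n * Real.log (gaussIter α n)⁻¹

theorem gaussProd_succ (α : ℝ) (n : ℕ) :
    gaussProd α (n + 1) = gaussProd α n * gaussIter α n :=
  Finset.prod_range_succ _ _

section GaussProd

variable {α : ℝ} (hα : α ∈ Set.Ioo 0 1) (hirr : Irrational α)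
include hα hirr

theorem gaussProd_pos (n : ℕ) : 0 < gaussProd α n :=
  Finset.prod_pos fun i _ => gaussIter_pos hα hirr i

theorem log_inv_gaussIter_nonneg (n : ℕ) : 0 ≤ Real.log (gaussIter α n)⁻¹ :=
  Real.log_nonneg (one_le_inv₀ (gaussIter_pos hα hirr n) |>.2 (gaussIter_lt_one hα hirr n).le)

theorem yoccozTerm_nonneg (n : ℕ) : 0 ≤ yoccozTerm α n :=
  mul_nonneg (gaussProd_pos hα hirr n).le (log_inv_gaussIter_nonneg hα hirr n)

theorem yoccozTerm_le_log_two_mul_gaussProd {m : ℕ} (h : 1 / 2 < gaussIter α m) :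
    yoccozTerm α m ≤ Real.log 2 * gaussProd α m := by
  have hpos := gaussIter_pos hα hirr m
  rw [yoccozTerm, mul_comm]
  refine mul_le_mul_of_nonneg_right (Real.log_le_log (inv_pos.2 hpos) ?_)
    (gaussProd_pos hα hirr m).le
  rw [inv_le_comm₀ hpos two_pos]
  linarith

theorem gaussProd_succ_mul_cfq_add (n : ℕ) :
    gaussProd α (n + 1) * (cfq α (n + 1) + cfq α n * gaussIter α (n + 1)) = 1 := by
  induction n with
  | zero =>
    have hpos : gaussIter α 0 ≠ 0 := (gaussIter_pos hα hirr 0).ne'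
    simp only [gaussProd, Finset.prod_range_one, cfq, Int.cast_one, one_mul, zero_add,
      gaussIter_succ]
    field_simp
    ring
  | succ n ih =>
    have hpos : gaussIter α (n + 1) ≠ 0 := (gaussIter_pos hα hirr (n + 1)).ne'
    rw [gaussProd_succ, gaussIter_succ α (n + 1), cfq_add_two]
    push_cast
    field_simp
    linear_combination ih

theorem gaussProd_le_one_div_cfq (n : ℕ) : gaussProd α n ≤ 1 / cfq α n := by
  rw [le_div_iff₀ (cfq_pos hα hirr n)]
  cases n with
  | zero => simp [gaussProd, cfq]
  | succ n =>
    have hrest : 0 ≤ gaussProd α (n + 1) * (cfq α n * gaussIter α (n + 1)) :=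
      (mul_pos (gaussProd_pos hα hirr _) (mul_pos (cfq_pos hα hirr n) (gaussIter_pos hα hirr _))).le
    linarith [gaussProd_succ_mul_cfq_add hα hirr n]

theorem one_div_cfq_le_two_mul_gaussProd (n : ℕ) : 1 / cfq α n ≤ 2 * gaussProd α n := by
  rw [div_le_iff₀ (cfq_pos hα hirr n)]
  cases n with
  | zero => simp [gaussProd, cfq]
  | succ n =>
    have hmono : (cfq α n : ℝ) ≤ cfq α (n + 1) := by exact_mod_cast cfq_le_cfq_succ hα hirr n
    have hlt : (cfq α n : ℝ) * gaussIter α (n + 1) ≤ cfq α (n + 1) := by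
      nlinarith [gaussIter_lt_one hα hirr (n + 1), gaussIter_pos hα hirr (n + 1), cfq_pos hα hirr n]
    nlinarith [gaussProd_succ_mul_cfq_add hα hirr n, gaussProd_pos hα hirr (n + 1)]

theorem summable_gaussProd : Summable (gaussProd α) :=
  Summable.of_nonneg_of_le (fun n => (gaussProd_pos hα hirr n).le)
    (gaussProd_le_one_div_cfq hα hirr)
    (summable_one_div_of_mul_le_add_two one_lt_two (cfq_pos hα hirr)
      (two_mul_cfq_le_cfq_add_two hα hirr))

theorem log_cfq_div_cfq_nonneg (n : ℕ) : 0 ≤ Real.log (cfq α n) / cfq α n :=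
  div_nonneg (Real.log_nonneg (by exact_mod_cast one_le_cfq hα hirr n)) (cfq_pos hα hirr n).le

theorem summable_log_cfq_div_cfq : Summable fun n => Real.log (cfq α n) / cfq α n := by
  have hsqrt : Summable fun n => 1 / √(cfq α n : ℝ) := by
    refine summable_one_div_of_mul_le_add_two Real.one_lt_sqrt_two
      (fun n => Real.sqrt_pos.2 (cfq_pos hα hirr n)) fun n => ?_
    rw [← Real.sqrt_mul zero_le_two]
    exact Real.sqrt_le_sqrt (two_mul_cfq_le_cfq_add_two hα hirr n)
  refine Summable.of_nonneg_of_le (log_cfq_div_cfq_nonneg hα hirr) (fun n => ?_)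
    (hsqrt.mul_left 2)
  have hq := cfq_pos hα hirr n
  have hlog : Real.log (cfq α n) ≤ 2 * √(cfq α n : ℝ) := by
    simpa [Real.sqrt_eq_rpow, div_eq_mul_inv, mul_comm] using
      Real.log_le_rpow_div hq.le (by norm_num : (0 : ℝ) < 1 / 2)
  calc Real.log (cfq α n) / cfq α n ≤ 2 * √(cfq α n : ℝ) / cfq α n := by gcongr
    _ = 2 * (1 / √(cfq α n : ℝ)) := by
      have := Real.sq_sqrt hq.le
      field_simp
      linarith

theorem log_cfq_succ_div_cfq_le (n : ℕ) :
    Real.log (cfq α (n + 1) / cfq α n) ≤ Real.log 2 + Real.log (gaussIter α n)⁻¹ := by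
  have hq := cfq_pos hα hirr n
  refine Real.log_le_log_two_add_log (a := cfa α n) (by exact_mod_cast one_le_cfa hα hirr n)
    (div_pos (cfq_pos hα hirr _) hq) ?_ (by rw [inv_eq_one_div]; exact Int.floor_le _)
  rw [div_le_iff₀ hq]
  exact_mod_cast cfq_succ_le_cfa_add_one_mul hα hirr n

theorem log_inv_gaussIter_le (n : ℕ) :
    Real.log (gaussIter α n)⁻¹ ≤ Real.log 2 + Real.log (cfq α (n + 1) / cfq α n) := by
  have hq := cfq_pos hα hirr n
  refine Real.log_le_log_two_add_log (a := cfa α n) (by exact_mod_cast one_le_cfa hα hirr n)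
    (inv_pos.2 (gaussIter_pos hα hirr n))
    (by rw [inv_eq_one_div]; exact (Int.lt_floor_add_one _).le) ?_
  rw [le_div_iff₀ hq]
  exact_mod_cast cfa_mul_cfq_le_cfq_succ hα hirr n

theorem log_cfq_succ_div_cfq_eq (n : ℕ) : Real.log (cfq α (n + 1)) / cfq α n =
    Real.log (cfq α (n + 1) / cfq α n) / cfq α n + Real.log (cfq α n) / cfq α n := by
  rw [Real.log_div (cfq_pos hα hirr _).ne' (cfq_pos hα hirr n).ne']
  ring

theorem log_cfq_succ_div_cfq_nonneg (n : ℕ) : 0 ≤ Real.log (cfq α (n + 1) / cfq α n) :=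
  Real.log_nonneg <|
    (one_le_div (cfq_pos hα hirr n)).2 (by exact_mod_cast cfq_le_cfq_succ hα hirr n)

theorem log_cfq_succ_div_cfq_le_yoccozTerm (n : ℕ) :
    Real.log (cfq α (n + 1)) / cfq α n ≤
      2 * yoccozTerm α n + (2 * Real.log 2 * gaussProd α n + Real.log (cfq α n) / cfq α n) := by
  have hratio : Real.log (cfq α (n + 1) / cfq α n) * (1 / cfq α n) ≤
      (Real.log 2 + Real.log (gaussIter α n)⁻¹) * (2 * gaussProd α n) :=
    mul_le_mul (log_cfq_succ_div_cfq_le hα hirr n) (one_div_cfq_le_two_mul_gaussProd hα hirr n)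
      (one_div_pos.2 (cfq_pos hα hirr n)).le
      (add_nonneg (Real.log_nonneg one_le_two) (log_inv_gaussIter_nonneg hα hirr n))
  rw [log_cfq_succ_div_cfq_eq hα hirr, div_eq_mul_one_div _ (cfq α n : ℝ), yoccozTerm]
  linarith

theorem yoccozTerm_le_log_cfq_succ_div_cfq (n : ℕ) :
    yoccozTerm α n ≤ Real.log (cfq α (n + 1)) / cfq α n + Real.log 2 * gaussProd α n := by
  have hratio : gaussProd α n * Real.log (cfq α (n + 1) / cfq α n) ≤
      Real.log (cfq α (n + 1) / cfq α n) / cfq α n :=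
    (mul_le_mul_of_nonneg_right (gaussProd_le_one_div_cfq hα hirr n)
      (log_cfq_succ_div_cfq_nonneg hα hirr n)).trans_eq (one_div_mul_eq_div _ _)
  have hlog : yoccozTerm α n ≤
      gaussProd α n * (Real.log 2 + Real.log (cfq α (n + 1) / cfq α n)) :=
    mul_le_mul_of_nonneg_left (log_inv_gaussIter_le hα hirr n) (gaussProd_pos hα hirr n).le
  rw [log_cfq_succ_div_cfq_eq hα hirr]
  linarith [log_cfq_div_cfq_nonneg hα hirr n]

theorem summable_yoccozTerm_iff : Summable (yoccozTerm α) ↔ IsBrjuno α := by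
  have hβ := summable_gaussProd hα hirr
  constructor
  · intro hsum
    exact summable_of_nonneg_of_le_mul_add
      (fun n => div_nonneg (Real.log_nonneg (by exact_mod_cast one_le_cfq hα hirr _))
        (cfq_pos hα hirr n).le)
      (log_cfq_succ_div_cfq_le_yoccozTerm hα hirr) hsum
      ((hβ.mul_left (2 * Real.log 2)).add (summable_log_cfq_div_cfq hα hirr))
  · intro hsum
    exact summable_of_nonneg_of_le_mul_add (C := 1) (yoccozTerm_nonneg hα hirr)
      (fun n => by simpa using yoccozTerm_le_log_cfq_succ_div_cfq hα hirr n) hsum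
      (hβ.mul_left (Real.log 2))

end GaussProd

noncomputable def nearIdx (α : ℝ) : ℕ → ℕ
  | 0 => 0
  | n + 1 => if gaussIter α (nearIdx α n) < 1 / 2 then nearIdx α n + 1 else nearIdx α n + 2

/-- The index `m` with `xₘ / 2 ≤ αₙ ≤ xₘ`. -/
noncomputable def matchIdx (α : ℝ) (n : ℕ) : ℕ :=
  if gaussIter α (nearIdx α n) < 1 / 2 then nearIdx α n else nearIdx α n + 1

noncomputable def nearTerm (α : ℝ) (n : ℕ) : ℝ :=
  (∏ i ∈ Finset.range n, modCF α i) * Real.log (modCF α n)⁻¹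

theorem nearIdx_succ (α : ℝ) (n : ℕ) : nearIdx α (n + 1) = matchIdx α n + 1 := by
  unfold nearIdx matchIdx
  split_ifs <;> rfl

theorem nearIdx_le_matchIdx (α : ℝ) (n : ℕ) : nearIdx α n ≤ matchIdx α n := by
  unfold matchIdx
  split_ifs <;> omega

theorem matchIdx_strictMono (α : ℝ) : StrictMono (matchIdx α) :=
  strictMono_nat_of_lt_succ fun n => by
    have := nearIdx_le_matchIdx α (n + 1)
    rw [nearIdx_succ] at this
    omega

theorem exists_nearIdx_le_lt_nearIdx_succ (α : ℝ) (m : ℕ) :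
    ∃ n, nearIdx α n ≤ m ∧ m < nearIdx α (n + 1) := by
  induction m with
  | zero => exact ⟨0, le_rfl, by rw [nearIdx_succ]; omega⟩
  | succ m ih =>
    obtain ⟨n, hle, hlt⟩ := ih
    by_cases hnext : m + 1 < nearIdx α (n + 1)
    · exact ⟨n, by omega, hnext⟩
    · refine ⟨n + 1, by omega, ?_⟩
      rw [nearIdx_succ α (n + 1)]
      have := nearIdx_le_matchIdx α (n + 1)
      omega

section NearestInteger

variable {α : ℝ} (hα : α ∈ Set.Ioo 0 1) (hirr : Irrational α)
include hα hirr

theorem half_lt_gaussIter_of_notMem_range {m : ℕ} (hm : m ∉ Set.range (matchIdx α)) :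
    1 / 2 < gaussIter α m := by
  obtain ⟨n, hle, hlt⟩ := exists_nearIdx_le_lt_nearIdx_succ α m
  rw [nearIdx_succ] at hlt
  have hne : matchIdx α n ≠ m := fun h => hm ⟨n, h⟩
  unfold matchIdx at hne hlt
  split_ifs at hne hlt with hhalf
  · omega
  · obtain rfl : m = nearIdx α n := by omega
    exact (not_lt.1 hhalf).lt_of_ne' (gaussIter_ne_half hα hirr _)

theorem modCF_eq_min (n : ℕ) :
    modCF α n = min (gaussIter α (nearIdx α n)) (1 - gaussIter α (nearIdx α n)) := by
  induction n with
  | zero =>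
    change |α - round α| = min α (1 - α)
    rw [abs_sub_round_eq_min, Int.fract_eq_self.2 ⟨hα.1.le, hα.2⟩]
  | succ n ih =>
    change |1 / modCF α n - round (1 / modCF α n)| = _
    rw [ih]
    by_cases hhalf : gaussIter α (nearIdx α n) < 1 / 2
    · rw [min_eq_left (by linarith), abs_sub_round_eq_min, nearIdx, if_pos hhalf]
      rfl
    · have hhalf' := (not_lt.1 hhalf).lt_of_ne' (gaussIter_ne_half hα hirr _)
      rw [min_eq_right (by linarith), abs_sub_round_eq_min, nearIdx, if_neg hhalf,
        fract_one_div_one_sub_gaussIter hα hirr hhalf']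

theorem modCF_pos (n : ℕ) : 0 < modCF α n := by
  rw [modCF_eq_min hα hirr]
  exact lt_min (gaussIter_pos hα hirr _) (sub_pos.2 (gaussIter_lt_one hα hirr _))

theorem modCF_mul_gaussProd (n : ℕ) :
    modCF α n * gaussProd α (nearIdx α n) = gaussProd α (nearIdx α (n + 1)) := by
  rw [modCF_eq_min hα hirr]
  by_cases hhalf : gaussIter α (nearIdx α n) < 1 / 2
  · rw [min_eq_left (by linarith), nearIdx, if_pos hhalf, gaussProd_succ, mul_comm]
  · have hhalf' := (not_lt.1 hhalf).lt_of_ne' (gaussIter_ne_half hα hirr _)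
    rw [min_eq_right (by linarith), nearIdx, if_neg hhalf, gaussProd_succ, gaussProd_succ,
      one_sub_gaussIter_of_half_lt hα hirr hhalf']
    ring

theorem prod_modCF (n : ℕ) : ∏ i ∈ Finset.range n, modCF α i = gaussProd α (nearIdx α n) := by
  induction n with
  | zero => rfl
  | succ n ih => rw [Finset.prod_range_succ, ih, mul_comm, modCF_mul_gaussProd hα hirr]

theorem yoccozTerm_matchIdx_le_nearTerm (n : ℕ) : yoccozTerm α (matchIdx α n) ≤ nearTerm α n := by
  rw [nearTerm, prod_modCF hα hirr, modCF_eq_min hα hirr, yoccozTerm, matchIdx]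
  set m := nearIdx α n
  by_cases hhalf : gaussIter α m < 1 / 2
  · rw [if_pos hhalf, min_eq_left (by linarith)]
  · have hhalf' := (not_lt.1 hhalf).lt_of_ne' (gaussIter_ne_half hα hirr _)
    have hx := gaussIter_pos hα hirr m
    have hx' := gaussIter_pos hα hirr (m + 1)
    rw [if_neg hhalf, min_eq_right (by linarith), one_sub_gaussIter_of_half_lt hα hirr hhalf',
      gaussProd_succ, mul_inv, Real.log_mul (inv_ne_zero hx.ne') (inv_ne_zero hx'.ne'), mul_assoc]
    refine mul_le_mul_of_nonneg_left ?_ (gaussProd_pos hα hirr m).le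
    have := log_inv_gaussIter_nonneg hα hirr m
    have := log_inv_gaussIter_nonneg hα hirr (m + 1)
    nlinarith [gaussIter_lt_one hα hirr m]

theorem nearTerm_le (n : ℕ) :
    nearTerm α n ≤
      2 * yoccozTerm α (matchIdx α n) + 2 * Real.log 2 * gaussProd α (matchIdx α n) := by
  rw [nearTerm, prod_modCF hα hirr, modCF_eq_min hα hirr, yoccozTerm, matchIdx]
  set m := nearIdx α n
  have hlog2 : 0 ≤ Real.log 2 := Real.log_nonneg one_le_two
  by_cases hhalf : gaussIter α m < 1 / 2
  · rw [if_pos hhalf, min_eq_left (by linarith)]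
    have hβ := gaussProd_pos hα hirr m
    nlinarith [mul_nonneg hβ.le (log_inv_gaussIter_nonneg hα hirr m), mul_nonneg hlog2 hβ.le]
  · have hhalf' := (not_lt.1 hhalf).lt_of_ne' (gaussIter_ne_half hα hirr _)
    have hx := gaussIter_pos hα hirr m
    have hx' := gaussIter_pos hα hirr (m + 1)
    have hβ := gaussProd_pos hα hirr m
    have hlog : Real.log (gaussIter α m)⁻¹ ≤ Real.log 2 := by
      refine Real.log_le_log (inv_pos.2 hx) ?_
      rw [inv_le_comm₀ hx two_pos]
      linarith
    rw [if_neg hhalf, min_eq_right (by linarith), one_sub_gaussIter_of_half_lt hα hirr hhalf',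
      gaussProd_succ, mul_inv, Real.log_mul (inv_ne_zero hx.ne') (inv_ne_zero hx'.ne')]
    have hL := mul_nonneg hβ.le (log_inv_gaussIter_nonneg hα hirr (m + 1))
    have hx2 : 0 ≤ 2 * gaussIter α m - 1 := by linarith
    nlinarith [mul_le_mul_of_nonneg_left hlog hβ.le, mul_nonneg hx2 hL,
      mul_nonneg hx2 (mul_nonneg hβ.le hlog2)]

theorem summable_nearTerm_iff : Summable (nearTerm α) ↔ Summable (yoccozTerm α) := by
  have hβ := summable_gaussProd hα hirr
  rw [← summable_comp_iff_of_le_of_notMem_range (matchIdx_strictMono α).injective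
    (yoccozTerm_nonneg hα hirr) (hβ.mul_left (Real.log 2))
    fun m hm => yoccozTerm_le_log_two_mul_gaussProd hα hirr
      (half_lt_gaussIter_of_notMem_range hα hirr hm)]
  constructor
  · exact fun hsum => Summable.of_nonneg_of_le (fun n => yoccozTerm_nonneg hα hirr _)
      (yoccozTerm_matchIdx_le_nearTerm hα hirr) hsum
  · intro hsum
    refine summable_of_nonneg_of_le_mul_add
      (fun n => (yoccozTerm_nonneg hα hirr _).trans (yoccozTerm_matchIdx_le_nearTerm hα hirr n))
      (nearTerm_le hα hirr) hsum
      ((hβ.comp_injective (matchIdx_strictMono α).injective).mul_left (2 * Real.log 2))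

theorem sProd_eq_exp (k : ℕ) :
    sProd α k = Real.exp (-∑ j ∈ Finset.range k, nearTerm α (j + 1) / modCF α 0) := by
  have hα₀ := (modCF_pos hα hirr 0).ne'
  rw [sProd, ← Finset.sum_neg_distrib, Real.exp_sum]
  refine Finset.prod_congr rfl fun j _ => ?_
  rw [Real.rpow_def_of_pos (modCF_pos hα hirr _), nearTerm, Finset.prod_range_succ',
    Real.log_inv]
  congr 1
  field_simp

end NearestInteger

/-- The sequence `α₁ · α₂^{α₁} · α₃^{α₁α₂} ⋯ α_k^{α₁⋯α_{k-1}}` tends to `0` iff the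
Brjuno series `∑ (log q_{n+1})/qₙ` diverges. -/
theorem sProd_tendsto_zero_iff_nonBrjuno (α : ℝ) (hα : α ∈ Set.Ioo (0 : ℝ) 1)
    (hirr : Irrational α) :
    Tendsto (sProd α) atTop (nhds 0) ↔
      ¬ Summable (fun n : ℕ => Real.log ((cfq α (n + 1) : ℝ)) / ((cfq α n : ℝ))) := by
  have hα₀ := modCF_pos hα hirr 0
  have hnonneg (n : ℕ) : 0 ≤ nearTerm α (n + 1) / modCF α 0 :=
    div_nonneg ((yoccozTerm_nonneg hα hirr _).trans (yoccozTerm_matchIdx_le_nearTerm hα hirr _))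
      hα₀.le
  rw [show sProd α = _ from funext (sProd_eq_exp hα hirr),
    tendsto_exp_neg_sum_range_zero_iff hnonneg,
    summable_div_const_iff hα₀.ne', summable_nat_add_iff 1 (f := nearTerm α),
    summable_nearTerm_iff hα hirr, summable_yoccozTerm_iff hα hirr]
  rfl
end

section
/- There exists a constant c > 0 such that for every α ∈ (0,1/2], every r ∈ (0,1/2), and every w ∈ ℂ satisfying |w − n/α| ≥ r/α for all integers n, one has |1 − e^{−2πiαw}| ≥ c·r·e^{2πα·Im w}. Consequently, for any σ ∈ ℂ, the point τ(w) = σ/(1 − e^{−2πiαw}) satisfies |τ(w)| ≤ (1/c)·(|σ|/r)·e^{−2πα·Im w}. -/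
/-!
Scaling by `α` reduces everything to `z = α w`, which stays at distance `≥ r` from `ℤ`, and
`‖1 - e^{-2πiz}‖ = e^{2π Im z} ‖1 - e^{2πiz}‖`; so `c = 1` works once `r ≤ ‖1 - e^{2πiz}‖`.
With `s = e^{-2π Im z}` one has `‖1 - e^{2πiz}‖² = (1 - s)² + 4 s sin²(π Re z)`. Either the
horizontal distance `d` of `z` to `ℤ` satisfies `2d² ≥ r²`, and Jordan's inequality
`|sin(π Re z)| ≥ 2d` gives `(1 - s)² + 8 s r² ≥ 4 r²`; or `2 (Im z)² ≥ r²`, and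
`|1 - e^t| ≥ |t| / (1 + |t|)` bounds `|1 - s|` below by `r`.
-/

open Complex
open scoped Real

theorem Complex.norm_one_sub_exp_sq (ζ : ℂ) :
    ‖1 - exp ζ‖ ^ 2 =
      (1 - Real.exp ζ.re) ^ 2 + 4 * Real.exp ζ.re * Real.sin (ζ.im / 2) ^ 2 := by
  have hcos : Real.cos ζ.im = 1 - 2 * Real.sin (ζ.im / 2) ^ 2 := by
    rw [← Real.cos_two_mul_eq_one_sub, mul_div_cancel₀ _ two_ne_zero]
  rw [Complex.sq_norm, normSq_apply, sub_re, sub_im, one_re, one_im, exp_re, exp_im]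
  linear_combination Real.exp ζ.re ^ 2 * Real.cos_sq_add_sin_sq ζ.im - 2 * Real.exp ζ.re * hcos

theorem Complex.norm_one_sub_exp_neg (ζ : ℂ) :
    ‖1 - exp (-ζ)‖ = Real.exp (-ζ.re) * ‖1 - exp ζ‖ := by
  rw [← neg_re, ← norm_exp, ← norm_mul, mul_sub, mul_one, ← exp_add, neg_add_cancel, exp_zero,
    norm_sub_rev]

theorem Real.abs_div_one_add_abs_le_abs_one_sub_exp (t : ℝ) :
    |t| / (1 + |t|) ≤ |1 - exp t| := by
  rw [div_le_iff₀ (by positivity)]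
  rcases le_total 0 t with ht | ht
  · have := add_one_le_exp t
    rw [abs_of_nonneg ht, abs_of_nonpos (by linarith)]
    nlinarith
  · have hneg := add_one_le_exp (-t)
    have hinv : exp t * exp (-t) = 1 := by rw [← exp_add, add_neg_cancel, exp_zero]
    have := exp_pos t
    rw [abs_of_nonpos ht, abs_of_nonneg (by nlinarith)]
    nlinarith

theorem Real.le_abs_one_sub_exp_of_two_mul_le_abs {r t : ℝ} (hr : r < 1 / 2) (ht : 2 * r ≤ |t|) :
    r ≤ |1 - exp t| := by
  rcases le_or_gt r 0 with hr₀ | hr₀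
  · exact hr₀.trans (abs_nonneg _)
  have h := abs_div_one_add_abs_le_abs_one_sub_exp t
  rw [div_le_iff₀ (by positivity)] at h
  nlinarith

theorem Real.two_mul_abs_sub_round_le_abs_sin_pi_mul (x : ℝ) :
    2 * |x - round x| ≤ |sin (π * x)| := by
  have hshift : sin (π * x) = (-1) ^ round x * sin (π * (x - round x)) := by
    rw [← sin_add_int_mul_pi]; ring_nf
  have hjordan := mul_abs_le_abs_sin (x := π * (x - round x)) (by
    rw [abs_mul, abs_of_pos pi_pos]
    nlinarith [abs_sub_round x, pi_pos])
  rw [abs_mul, abs_of_pos pi_pos, ← mul_assoc, div_mul_cancel₀ _ pi_pos.ne'] at hjordan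
  rwa [hshift, abs_mul, abs_neg_one_zpow, one_mul]

theorem Complex.le_norm_one_sub_exp_two_pi_I_mul {r : ℝ} (hr : r < 1 / 2) {z : ℂ}
    (hz : ∀ n : ℤ, r ≤ ‖z - n‖) : r ≤ ‖1 - exp (2 * π * I * z)‖ := by
  rcases le_or_gt r 0 with hr₀ | hr₀
  · exact hr₀.trans (norm_nonneg _)
  set x := z.re
  set y := z.im
  set s := Real.exp (-(2 * π * y))
  have hs : 0 < s := Real.exp_pos _
  have hnorm : ‖1 - exp (2 * π * I * z)‖ ^ 2 = (1 - s) ^ 2 + 4 * s * Real.sin (π * x) ^ 2 := by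
    have hre : (2 * π * I * z).re = -(2 * π * y) := by simp [y]
    have him : (2 * π * I * z).im / 2 = π * x := by simp [x, mul_assoc]
    rw [norm_one_sub_exp_sq, hre, him]
  have hdist : r ^ 2 ≤ (x - round x) ^ 2 + y ^ 2 := by
    have h := pow_le_pow_left₀ hr₀.le (hz (round x)) 2
    rwa [Complex.sq_norm, normSq_apply, sub_re, sub_im, intCast_re, intCast_im, sub_zero,
      ← sq, ← sq] at h
  suffices r ^ 2 ≤ ‖1 - exp (2 * π * I * z)‖ ^ 2 from
    (abs_le_of_sq_le_sq' this (norm_nonneg _)).2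
  rw [hnorm]
  rcases le_total (r ^ 2) (2 * (x - round x) ^ 2) with hx | hy
  · have hsin := Real.two_mul_abs_sub_round_le_abs_sin_pi_mul x
    have hsin_sq : 8 * r ^ 2 ≤ 4 * Real.sin (π * x) ^ 2 := by
      nlinarith [sq_abs (x - round x), sq_abs (Real.sin (π * x)), abs_nonneg (x - round x)]
    have hr_sq : 0 ≤ 1 - 4 * r ^ 2 := by nlinarith
    nlinarith [sq_nonneg (s - (1 - 4 * r ^ 2)), mul_le_mul_of_nonneg_left hsin_sq hs.le,
      mul_nonneg (sq_nonneg r) hr_sq]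
  · have ht : 2 * r ≤ |-(2 * π * y)| := by
      have hπy : r ^ 2 ≤ (π * |y|) ^ 2 := by
        have hπ : 2 ≤ π ^ 2 := by nlinarith [Real.pi_gt_three]
        rw [mul_pow, sq_abs]
        nlinarith [mul_le_mul_of_nonneg_right hπ (sq_nonneg y)]
      have := abs_le_of_sq_le_sq' hπy (by positivity)
      rw [abs_neg, abs_mul, abs_mul, abs_two, abs_of_pos Real.pi_pos]
      linarith
    have hs_far : r ≤ |1 - s| := Real.le_abs_one_sub_exp_of_two_mul_le_abs hr ht
    nlinarith [sq_abs (1 - s), sq_nonneg (Real.sin (π * x)), abs_nonneg (1 - s)]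

/-- Lower bound for `|1 - e^{-2πiαw}|` away from the lattice `(1/α)ℤ`, and the resulting
upper bound for the covering map `τ(w) = σ/(1 - e^{-2πiαw})`: there is `c > 0` such that
for all `α ∈ (0,1/2]`, `r ∈ (0,1/2)` and `w` with `|w - n/α| ≥ r/α` for all integers `n`,
`|1 - e^{-2πiαw}| ≥ c·r·e^{2πα·Im w}`, hence `|τ(w)| ≤ (1/c)(|σ|/r)·e^{-2πα·Im w}`. -/
theorem covering_estimate :
    ∃ c : ℝ, 0 < c ∧
      ∀ α ∈ Set.Ioc (0 : ℝ) (1 / 2), ∀ r ∈ Set.Ioo (0 : ℝ) (1 / 2), ∀ w : ℂ,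
        (∀ n : ℤ, r / α ≤ ‖w - (n : ℂ) / (α : ℂ)‖) →
        c * r * Real.exp (2 * Real.pi * α * w.im) ≤
            ‖1 - Complex.exp (-(2 * Real.pi * Complex.I * α * w))‖ ∧
          ∀ σ : ℂ,
            ‖σ / (1 - Complex.exp (-(2 * Real.pi * Complex.I * α * w)))‖ ≤
              (1 / c) * (‖σ‖ / r) * Real.exp (-(2 * Real.pi * α * w.im)) := by
  refine ⟨1, one_pos, ?_⟩
  rintro α ⟨hα, -⟩ r ⟨hr₀, hr⟩ w hw
  have hz (n : ℤ) : r ≤ ‖(α : ℂ) * w - n‖ := by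
    have hscale : (α : ℂ) * w - n = α * (w - n / α) := by
      field_simp [ofReal_ne_zero.2 hα.ne']
    rw [hscale, norm_mul, norm_real, Real.norm_of_nonneg hα.le, ← div_le_iff₀' hα]
    exact hw n
  have hexp : -(2 * π * I * α * w) = -(2 * π * I * (α * w)) := by ring
  have hre : -(2 * π * I * (α * w)).re = 2 * π * α * w.im := by simp [mul_assoc]
  have hlower : 1 * r * Real.exp (2 * π * α * w.im) ≤ ‖1 - exp (-(2 * π * I * α * w))‖ := by
    rw [hexp, norm_one_sub_exp_neg, hre, one_mul, mul_comm]
    exact mul_le_mul_of_nonneg_left (le_norm_one_sub_exp_two_pi_I_mul hr hz) (Real.exp_pos _).le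
  refine ⟨hlower, fun σ => ?_⟩
  calc ‖σ / (1 - exp (-(2 * π * I * α * w)))‖ = ‖σ‖ / ‖1 - exp (-(2 * π * I * α * w))‖ :=
        norm_div _ _
    _ ≤ ‖σ‖ / (1 * r * Real.exp (2 * π * α * w.im)) :=
        div_le_div_of_nonneg_left (norm_nonneg σ) (by positivity) hlower
    _ = 1 / 1 * (‖σ‖ / r) * Real.exp (-(2 * π * α * w.im)) := by
        rw [Real.exp_neg]; field_simp
end
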